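/- arXiv:1608.04761 — 2 statements merged into one kernel-verified Lean document; each statement's English description precedes it below -/
import Mathlib

section
/- Let W̃ be the 4×4 diagonal matrix diag(x,y,z,w). Then the determinant of the bottom-right 3×3 submatrix of (h^T⊗h^T)·W̃·(h⊗h), where h = (1/√2)[[1,1],[-1,1]], equals (1/4)(wyz + xyz + wxy + wxz). In particular, if x,y,z,w > 0 this quantity is strictly positive. -/
open Matrix

noncomputable def h : Matrix (Fin 2) (Fin 2) ℝ :=
  (Real.sqrt 2)⁻¹ • !![1, 1; -1, 1]

def fst4 (k : Fin 4) : Fin 2 := ⟨k.val / 2, by omega⟩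
def snd4 (k : Fin 4) : Fin 2 := ⟨k.val % 2, by omega⟩

/-- Kronecker product of two `2 × 2` real matrices as a `4 × 4` matrix. -/
def kron4 (A B : Matrix (Fin 2) (Fin 2) ℝ) : Matrix (Fin 4) (Fin 4) ℝ :=
  Matrix.of fun r c => A (fst4 r) (fst4 c) * B (snd4 r) (snd4 c)

/-- Bottom-right `3 × 3` submatrix of a `4 × 4` matrix. -/
def sub3 (M : Matrix (Fin 4) (Fin 4) ℝ) : Matrix (Fin 3) (Fin 3) ℝ :=
  Matrix.of fun i j => M i.succ j.succ

/-!
Up to the scalar `1/2`, `h ⊗ h` is the `4 × 4` Sylvester–Hadamard matrix `H`, so the matrix in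
question is `(1/4) Hᵀ diag(x,y,z,w) H`. The bottom-right block of `Hᵀ diag(x,y,z,w) H` has
`s = x + y + z + w` on its diagonal and off it the sums `a, b, c` of `x, y, z, w` signed by the
products of two columns of `H`; its determinant `s³ + 2abc - s(a² + b² + c²)` is `16` times the
third elementary symmetric polynomial of `x, y, z, w`, and the scalar contributes `(1/4)³`.
-/

def hadamard4 : Matrix (Fin 4) (Fin 4) ℝ :=
  !![1, 1, 1, 1; -1, 1, -1, 1; -1, -1, 1, 1; 1, -1, -1, 1]

lemma kron4_smul (c d : ℝ) (A B : Matrix (Fin 2) (Fin 2) ℝ) :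
    kron4 (c • A) (d • B) = (c * d) • kron4 A B := by
  ext i j
  simp only [kron4, of_apply, Matrix.smul_apply, smul_eq_mul]
  ring

lemma kron4_transpose (A B : Matrix (Fin 2) (Fin 2) ℝ) : kron4 Aᵀ Bᵀ = (kron4 A B)ᵀ := rfl

lemma sub3_smul (c : ℝ) (M : Matrix (Fin 4) (Fin 4) ℝ) : sub3 (c • M) = c • sub3 M := rfl

lemma kron4_h_h : kron4 h h = (1 / 2 : ℝ) • hadamard4 := by
  have hsq : (Real.sqrt 2)⁻¹ * (Real.sqrt 2)⁻¹ = 1 / 2 := by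
    rw [← mul_inv, Real.mul_self_sqrt zero_le_two, one_div]
  rw [h, kron4_smul, hsq]
  congr 1
  ext i j
  fin_cases i <;> fin_cases j <;> norm_num [kron4, fst4, snd4, hadamard4]

lemma sub3_hadamard4_conj_diagonal (x y z w : ℝ) :
    sub3 (hadamard4ᵀ * diagonal ![x, y, z, w] * hadamard4) =
      !![x + y + z + w, x - y - z + w, x + y - z - w;
         x - y - z + w, x + y + z + w, x - y + z - w;
         x + y - z - w, x - y + z - w, x + y + z + w] := by
  ext i j
  fin_cases i <;> fin_cases j <;>
    simp [sub3, hadamard4, mul_apply, Fin.sum_univ_four] <;> ring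

/-- Evaluating the squangle on the diagonal matrix `diag(x,y,z,w)` (the `12|34`
flattening of a clipped tensor from quartet `13|24`) gives
`(1/4)(wyz + xyz + wxy + wxz)`; this is positive when `x,y,z,w > 0`. -/
theorem squangle_on_diag (x y z w : ℝ) :
    (sub3 (kron4 hᵀ hᵀ * Matrix.diagonal ![x, y, z, w] * kron4 h h)).det =
      (1 / 4) * (w * y * z + x * y * z + w * x * y + w * x * z) ∧
    (0 < x → 0 < y → 0 < z → 0 < w →
      0 < (sub3 (kron4 hᵀ hᵀ * Matrix.diagonal ![x, y, z, w] * kron4 h h)).det) := by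
  have hconj : kron4 hᵀ hᵀ * diagonal ![x, y, z, w] * kron4 h h =
      (1 / 4 : ℝ) • (hadamard4ᵀ * diagonal ![x, y, z, w] * hadamard4) := by
    rw [kron4_transpose, kron4_h_h, transpose_smul, Matrix.smul_mul, Matrix.mul_smul,
      Matrix.smul_mul, smul_smul]
    norm_num
  have hdet : (sub3 (kron4 hᵀ hᵀ * diagonal ![x, y, z, w] * kron4 h h)).det =
      (1 / 4) * (w * y * z + x * y * z + w * x * y + w * x * z) := by
    rw [hconj, sub3_smul, det_smul, sub3_hadamard4_conj_diagonal, det_fin_three]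
    simp only [Fintype.card_fin, of_apply, cons_val', cons_val_zero, cons_val_fin_one,
      cons_val_one, cons_val]
    ring
  refine ⟨hdet, fun hx hy hz hw => ?_⟩
  rw [hdet]
  positivity
end

section
/- Let W̃ be the 4×4 matrix with entries W̃₁₁ = x, W̃₂₃ = y, W̃₃₂ = z, W̃₄₄ = w and all other entries zero. Then the determinant of the bottom-right 3×3 submatrix of (h^T⊗h^T)·W̃·(h⊗h), with h = (1/√2)[[1,1],[-1,1]], equals −(1/4)(wyz + xyz + wxy + wxz). In particular, if x,y,z,w > 0 this quantity is strictly negative. -/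
open Matrix

lemma hsq : (Real.sqrt 2)⁻¹ * (Real.sqrt 2)⁻¹ = 2⁻¹ := by
  rw [← mul_inv, Real.mul_self_sqrt (by norm_num : (0:ℝ) ≤ 2)]

lemma kron_hh : kron4 h h =
    !![1/2,1/2,1/2,1/2; -(1/2),1/2,-(1/2),1/2; -(1/2),-(1/2),1/2,1/2; 1/2,-(1/2),-(1/2),1/2] := by
  ext i j
  fin_cases i <;> fin_cases j <;>
    simp [kron4, h, show fst4 0 = 0 from rfl, show fst4 1 = 0 from rfl,
      show fst4 2 = 1 from rfl, show fst4 3 = 1 from rfl,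
      show snd4 0 = 0 from rfl, show snd4 1 = 1 from rfl,
      show snd4 2 = 0 from rfl, show snd4 3 = 1 from rfl, Matrix.vecHead, Matrix.vecTail] <;>
    nlinarith [hsq]

lemma kron_hth : kron4 hᵀ hᵀ =
    !![1/2,-(1/2),-(1/2),1/2; 1/2,1/2,-(1/2),-(1/2); 1/2,-(1/2),1/2,-(1/2); 1/2,1/2,1/2,1/2] := by
  ext i j
  fin_cases i <;> fin_cases j <;>
    simp [kron4, h, show fst4 0 = 0 from rfl, show fst4 1 = 0 from rfl,
      show fst4 2 = 1 from rfl, show fst4 3 = 1 from rfl,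
      show snd4 0 = 0 from rfl, show snd4 1 = 1 from rfl,
      show snd4 2 = 0 from rfl, show snd4 3 = 1 from rfl, Matrix.vecHead, Matrix.vecTail] <;>
    nlinarith [hsq]

/-- Evaluating the squangle on the matrix with entries `x, y, z, w` at positions
`(1,1), (2,3), (3,2), (4,4)` (the `12|34` flattening of a clipped tensor from
quartet `14|23`) gives `-(1/4)(wyz + xyz + wxy + wxz)`; this is negative when
`x,y,z,w > 0`. -/
theorem squangle_on_antidiag (x y z w : ℝ) :
    (sub3 (kron4 hᵀ hᵀ *
        !![x, 0, 0, 0; 0, 0, y, 0; 0, z, 0, 0; 0, 0, 0, w] * kron4 h h)).det =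
      -(1 / 4) * (w * y * z + x * y * z + w * x * y + w * x * z) ∧
    (0 < x → 0 < y → 0 < z → 0 < w →
      (sub3 (kron4 hᵀ hᵀ *
        !![x, 0, 0, 0; 0, 0, y, 0; 0, z, 0, 0; 0, 0, 0, w] * kron4 h h)).det < 0) := by
  have key : (sub3 (kron4 hᵀ hᵀ *
        !![x, 0, 0, 0; 0, 0, y, 0; 0, z, 0, 0; 0, 0, 0, w] * kron4 h h)).det =
      -(1 / 4) * (w * y * z + x * y * z + w * x * y + w * x * z) := by
    rw [kron_hh, kron_hth]
    simp [sub3, det_fin_three, Matrix.mul_apply, Fin.sum_univ_four,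
      show (Fin.succ 0 : Fin 4) = 1 from rfl, show (Fin.succ 1 : Fin 4) = 2 from rfl,
      show (Fin.succ 2 : Fin 4) = 3 from rfl, Matrix.vecHead, Matrix.vecTail]
    ring
  refine ⟨key, fun hx hy hz hw => ?_⟩
  rw [key]
  nlinarith [mul_pos (mul_pos hw hy) hz, mul_pos (mul_pos hx hy) hz,
    mul_pos (mul_pos hw hx) hy, mul_pos (mul_pos hw hx) hz]
end
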